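/- arXiv:2605.26507 — 2 statements merged into one kernel-verified Lean document; each statement's English description precedes it below -/
import Mathlib

section
/- Under common censoring, the lower-priority IPCW kernel of Cui et al. is unbiased: for q ≥ 2, E[ (∏_{k<q} 1{T_{ki} > τ, Cᵢ > τ, T_{kj} > τ, Cⱼ > τ}) · 1{T_{qi} > T_{qj}, T_{qj} ≤ τ} / (G₁(τ)·G₀(τ)) ] = P( T_{ki} > τ and T_{kj} > τ for all k < q, and T_{qi} > T_{qj}, T_{qj} ≤ τ ). -/
/-!
Write `A` for the latent event of the statement, a measurable event of the pair `(T_i, T_j)`.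
As `q` has a higher-priority component, the kernel's event is `A ∩ {C_i > τ} ∩ {C_j > τ}`.
The three assumed independences make `T_i, C_i, T_j, C_j` mutually independent, so
`(T_i, T_j)` is independent of `(C_i, C_j)` and `C_i` of `C_j`; hence the kernel's event
has probability `P(A) G₁(τ) G₀(τ)`, and dividing by `G₁(τ) G₀(τ)` leaves `P(A)`.
-/

open MeasureTheory ProbabilityTheory Set

theorem measurePreserving_prodProdProdComm {α β γ δ : Type*} [MeasurableSpace α]
    [MeasurableSpace β] [MeasurableSpace γ] [MeasurableSpace δ]
    (μa : Measure α) (μb : Measure β) (μc : Measure γ) (μd : Measure δ)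
    [SFinite μa] [SFinite μb] [SFinite μc] [SFinite μd] :
    MeasurePreserving (Equiv.prodProdProdComm α β γ δ)
      ((μa.prod μb).prod (μc.prod μd)) ((μa.prod μc).prod (μb.prod μd)) :=
  (measurePreserving_prodAssoc μa μc (μb.prod μd)).symm.comp <|
    ((MeasurePreserving.id μa).prod (measurePreserving_prodAssoc μc μb μd)).comp <|
    ((MeasurePreserving.id μa).prod
      ((Measure.measurePreserving_swap (μ := μb) (ν := μc)).prod
        (MeasurePreserving.id μd))).comp <|
    ((MeasurePreserving.id μa).prod (measurePreserving_prodAssoc μb μc μd).symm).comp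
      (measurePreserving_prodAssoc μa μb (μc.prod μd))

namespace ProbabilityTheory

variable {Ω E F : Type*} [MeasurableSpace Ω] [MeasurableSpace E] [MeasurableSpace F]
  {μ : Measure Ω}

theorem IndepFun.prodMk_prodMk_transpose [IsProbabilityMeasure μ] {X Y : Ω → E} {C D : Ω → F}
    (hX : Measurable X) (hY : Measurable Y) (hC : Measurable C) (hD : Measurable D)
    (hXC : IndepFun X C μ) (hYD : IndepFun Y D μ)
    (h : IndepFun (fun ω => (X ω, C ω)) (fun ω => (Y ω, D ω)) μ) :
    IndepFun (fun ω => (X ω, Y ω)) (fun ω => (C ω, D ω)) μ := by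
  have law_pairs : μ.map (fun ω => ((X ω, C ω), (Y ω, D ω)))
      = ((μ.map X).prod (μ.map C)).prod ((μ.map Y).prod (μ.map D)) := by
    rw [(indepFun_iff_map_prod_eq_prod_map_map (hX.prodMk hC).aemeasurable
        (hY.prodMk hD).aemeasurable).mp h,
      (indepFun_iff_map_prod_eq_prod_map_map hX.aemeasurable hC.aemeasurable).mp hXC,
      (indepFun_iff_map_prod_eq_prod_map_map hY.aemeasurable hD.aemeasurable).mp hYD]
  rw [indepFun_iff_map_prod_eq_prod_map_map (hX.prodMk hY).aemeasurable
      (hC.prodMk hD).aemeasurable,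
    (indepFun_iff_map_prod_eq_prod_map_map hX.aemeasurable hY.aemeasurable).mp
      (h.comp measurable_fst measurable_fst),
    (indepFun_iff_map_prod_eq_prod_map_map hC.aemeasurable hD.aemeasurable).mp
      (h.comp measurable_snd measurable_snd),
    ← (measurePreserving_prodProdProdComm _ _ _ _).map_eq, ← law_pairs,
    Measure.map_map (measurePreserving_prodProdProdComm (μ.map X) (μ.map C) (μ.map Y)
      (μ.map D)).measurable
      ((hX.prodMk hC).prodMk (hY.prodMk hD))]
  rfl

theorem IndepFun.measure_inter_preimage_inter_preimage_eq_mul {Z : Ω → E} {C D : Ω → F}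
    (h : IndepFun Z (fun ω => (C ω, D ω)) μ) (hCD : IndepFun C D μ)
    {S : Set E} {s t : Set F} (hS : MeasurableSet S) (hs : MeasurableSet s)
    (ht : MeasurableSet t) :
    μ (Z ⁻¹' S ∩ C ⁻¹' s ∩ D ⁻¹' t) = μ (Z ⁻¹' S) * μ (C ⁻¹' s) * μ (D ⁻¹' t) := by
  have hst : C ⁻¹' s ∩ D ⁻¹' t = (fun ω => (C ω, D ω)) ⁻¹' s ×ˢ t := rfl
  rw [inter_assoc, hst, h.measure_inter_preimage_eq_mul _ _ hS (hs.prod ht), ← hst,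
    hCD.measure_inter_preimage_eq_mul _ _ hs ht, mul_assoc]

end ProbabilityTheory

theorem integral_ite_one_eq_measureReal {Ω : Type*} [MeasurableSpace Ω] (μ : Measure Ω)
    {p : Ω → Prop} [DecidablePred p] (hp : MeasurableSet {ω | p ω}) :
    ∫ ω, (if p ω then (1 : ℝ) else 0) ∂μ = μ.real {ω | p ω} := by
  rw [← integral_indicator_one hp]
  congr with ω
  simp only [indicator_apply, mem_ofPred_eq, Pi.one_apply]

def lowerPriorityWin {Q : ℕ} (q : Fin Q) (τ : ℝ) : Set ((Fin Q → ℝ) × (Fin Q → ℝ)) :=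
  {p | (∀ k < q, τ < p.1 k ∧ τ < p.2 k) ∧ p.2 q < p.1 q ∧ p.2 q ≤ τ}

theorem measurableSet_lowerPriorityWin {Q : ℕ} (q : Fin Q) (τ : ℝ) :
    MeasurableSet (lowerPriorityWin q τ) := by
  unfold lowerPriorityWin
  measurability

theorem setOf_censored_lowerPriorityWin_eq {Ω : Type*} {Q : ℕ} (Ti Tj : Ω → Fin Q → ℝ)
    (Ci Cj : Ω → ℝ) {q : Fin Q} (hq : 1 ≤ (q : ℕ)) (τ : ℝ) :
    {ω | (∀ k < q, τ < Ti ω k ∧ τ < Ci ω ∧ τ < Tj ω k ∧ τ < Cj ω) ∧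
        Tj ω q < Ti ω q ∧ Tj ω q ≤ τ}
      = (fun ω => (Ti ω, Tj ω)) ⁻¹' lowerPriorityWin q τ ∩ Ci ⁻¹' Ioi τ ∩ Cj ⁻¹' Ioi τ := by
  have h0 : (⟨0, q.pos⟩ : Fin Q) < q := Fin.lt_def.mpr hq
  ext ω
  simp only [lowerPriorityWin, mem_ofPred_eq, mem_inter_iff, mem_preimage, mem_Ioi]
  constructor
  · rintro ⟨h_higher, h_q⟩
    obtain ⟨-, hCi, -, hCj⟩ := h_higher _ h0
    exact ⟨⟨⟨fun k hk => ⟨(h_higher k hk).1, (h_higher k hk).2.2.1⟩, h_q⟩, hCi⟩, hCj⟩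
  · rintro ⟨⟨⟨h_higher, h_q⟩, hCi⟩, hCj⟩
    exact ⟨fun k hk => ⟨(h_higher k hk).1, hCi, (h_higher k hk).2, hCj⟩, h_q⟩

theorem ipcw_lower_priority_unbiased_general
    {Ω : Type*} [MeasurableSpace Ω] (μ : Measure Ω) [IsProbabilityMeasure μ]
    (Q : ℕ) (Ti Tj : Ω → Fin Q → ℝ) (Ci Cj : Ω → ℝ)
    (hTi : Measurable Ti) (hTj : Measurable Tj)
    (hCi : Measurable Ci) (hCj : Measurable Cj)
    (hindep_i : IndepFun Ti Ci μ) (hindep_j : IndepFun Tj Cj μ)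
    (hindep_pairs :
      IndepFun (fun ω => (Ti ω, Ci ω)) (fun ω => (Tj ω, Cj ω)) μ)
    (q : Fin Q) (hq : 1 ≤ (q : ℕ))
    (τ : ℝ)
    (hG1 : 0 < (μ {ω | τ < Ci ω}).toReal)
    (hG0 : 0 < (μ {ω | τ < Cj ω}).toReal) :
    ∫ ω,
        (if (∀ k < q, τ < Ti ω k ∧ τ < Ci ω ∧ τ < Tj ω k ∧ τ < Cj ω) ∧
            Tj ω q < Ti ω q ∧ Tj ω q ≤ τ then (1:ℝ) else 0) /
          ((μ {ω' | τ < Ci ω'}).toReal * (μ {ω' | τ < Cj ω'}).toReal)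
        ∂μ
      = (μ {ω | (∀ k < q, τ < Ti ω k ∧ τ < Tj ω k) ∧
            Tj ω q < Ti ω q ∧ Tj ω q ≤ τ}).toReal := by
  have h_kernel_event := setOf_censored_lowerPriorityWin_eq Ti Tj Ci Cj hq τ
  have h_event_mul :=
    (IndepFun.prodMk_prodMk_transpose hTi hTj hCi hCj hindep_i hindep_j
      hindep_pairs).measure_inter_preimage_inter_preimage_eq_mul
      (hindep_pairs.comp measurable_snd measurable_snd)
      (measurableSet_lowerPriorityWin q τ) (measurableSet_Ioi (a := τ))
      (measurableSet_Ioi (a := τ))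
  have h_meas : MeasurableSet ((fun ω => (Ti ω, Tj ω)) ⁻¹' lowerPriorityWin q τ
      ∩ Ci ⁻¹' Ioi τ ∩ Cj ⁻¹' Ioi τ) :=
    (((measurableSet_lowerPriorityWin q τ).preimage (hTi.prodMk hTj)).inter
      (measurableSet_Ioi.preimage hCi)).inter (measurableSet_Ioi.preimage hCj)
  rw [integral_div, integral_ite_one_eq_measureReal μ (h_kernel_event ▸ h_meas),
    measureReal_def, h_kernel_event, h_event_mul, ENNReal.toReal_mul, ENNReal.toReal_mul,
    mul_assoc]
  exact mul_div_cancel_right₀ _ (mul_pos hG1 hG0).ne'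

/-- Under common censoring, the lower-priority IPCW kernel of
Cui et al. is unbiased: for a priority level `q ≥ 2` (here `1 ≤ q` in 0-based
indexing), the expectation of the kernel requiring every higher-priority
component to be observed event-free through `τ` for both subjects, divided by
`G₁(τ)·G₀(τ)`, equals the latent probability
`P(T_{ki} > τ and T_{kj} > τ for all k < q, T_{qi} > T_{qj}, T_{qj} ≤ τ)`. -/
theorem ipcw_lower_priority_unbiased
    {Ω : Type*} [MeasurableSpace Ω] (μ : Measure Ω) [IsProbabilityMeasure μ]
    (Q : ℕ) (Ti Tj : Ω → Fin Q → ℝ) (Ci Cj : Ω → ℝ)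
    (hTi : Measurable Ti) (hTj : Measurable Tj)
    (hCi : Measurable Ci) (hCj : Measurable Cj)
    (hposTi : ∀ ω k, 0 < Ti ω k) (hposTj : ∀ ω k, 0 < Tj ω k)
    (hposCi : ∀ ω, 0 < Ci ω) (hposCj : ∀ ω, 0 < Cj ω)
    (hindep_i : IndepFun Ti Ci μ) (hindep_j : IndepFun Tj Cj μ)
    (hindep_pairs :
      IndepFun (fun ω => (Ti ω, Ci ω)) (fun ω => (Tj ω, Cj ω)) μ)
    (q : Fin Q) (hq : 1 ≤ (q : ℕ))
    (τ : ℝ) (hτ : 0 < τ)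
    (hG1 : 0 < (μ {ω | τ < Ci ω}).toReal)
    (hG0 : 0 < (μ {ω | τ < Cj ω}).toReal) :
    ∫ ω,
        (if (∀ k < q, τ < Ti ω k ∧ τ < Ci ω ∧ τ < Tj ω k ∧ τ < Cj ω) ∧
            Tj ω q < Ti ω q ∧ Tj ω q ≤ τ then (1:ℝ) else 0) /
          ((μ {ω' | τ < Ci ω'}).toReal * (μ {ω' | τ < Cj ω'}).toReal)
        ∂μ
      = (μ {ω | (∀ k < q, τ < Ti ω k ∧ τ < Tj ω k) ∧
            Tj ω q < Ti ω q ∧ Tj ω q ≤ τ}).toReal :=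
  ipcw_lower_priority_unbiased_general μ Q Ti Tj Ci Cj hTi hTj hCi hCj hindep_i hindep_j
    hindep_pairs q hq τ hG1 hG0
end

section
/- The key identification integral for the conditional tie-weighting estimator holds: if S₁(t) is continuous and differentiable in t with H₀(t) = −∂/∂t P(T₁ⱼ > τ, T_{qj} > t) the control-subject prefix subdensity, then ∫₀^τ S_treated(τ,t)·H_control(τ,t) dt = P(T₁ᵢ > τ, T₁ⱼ > τ, T_{qi} > T_{qj}, T_{qj} ≤ τ) for independent treated and control subjects. -/
/-!
The hypothesis on `H` says that the control sub-distribution `B ↦ P(T₁ⱼ > τ, T_{qj} ∈ B)` has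
survival function with derivative `-H`; by the fundamental theorem of calculus it agrees with
`H · dt` on every interval, hence it is the measure with density `H`. Conditioning on the control
subject and using independence, the tie probability is the integral over `T_{qj} ∈ (0, τ]` of
`P(T₁ᵢ > τ, T_{qi} > T_{qj})` against this sub-distribution, i.e. against `H t dt`.
-/

open MeasureTheory ProbabilityTheory Set
open scoped ENNReal

namespace MeasureTheory.Measure

variable {ν : Measure ℝ} [IsFiniteMeasure ν] {H : ℝ → ℝ}

theorem nonneg_of_hasDerivAt_measureReal_Ioi {h t : ℝ}
    (hd : HasDerivAt (fun s => ν.real (Ioi s)) (-h) t) : 0 ≤ h :=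
  neg_nonpos.1 <| hd.nonpos_of_antitone fun _ _ hab => measureReal_mono (Ioi_subset_Ioi hab)

theorem eq_withDensity_of_hasDerivAt_measureReal_Ioi
    (hH : ∀ t, HasDerivAt (fun s => ν.real (Ioi s)) (-H t) t) (hHc : Continuous H) :
    ν = volume.withDensity fun t => ENNReal.ofReal (H t) := by
  refine ext_of_Ioc' _ _ (fun _ _ _ => measure_ne_top _ _) fun a b hab => ?_
  have hftc : ∫ t in a..b, H t = ν.real (Ioc a b) := by
    have := intervalIntegral.integral_eq_sub_of_hasDerivAt (fun t _ => hH t)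
      (hHc.neg.intervalIntegrable a b)
    rw [intervalIntegral.integral_neg] at this
    rw [← Ioi_sdiff_Ioi, measureReal_sdiff (Ioi_subset_Ioi hab.le) measurableSet_Ioi]
    linarith
  rw [withDensity_apply _ measurableSet_Ioc, ← ofReal_integral_eq_lintegral_ofReal
    hHc.integrableOn_Ioc (ae_of_all _ fun t => nonneg_of_hasDerivAt_measureReal_Ioi (hH t)),
    ← intervalIntegral.integral_of_le hab.le, hftc, ofReal_measureReal]

end MeasureTheory.Measure

theorem ProbabilityTheory.IndepFun.measure_preimage_eq_lintegral
    {Ω α β : Type*} [MeasurableSpace Ω] [MeasurableSpace α] [MeasurableSpace β]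
    {μ : Measure Ω} [IsFiniteMeasure μ] {X : Ω → α} {Y : Ω → β}
    (hXY : IndepFun X Y μ) (hX : Measurable X) (hY : Measurable Y)
    {S : Set (α × β)} (hS : MeasurableSet S) :
    μ {ω | (X ω, Y ω) ∈ S} = ∫⁻ ω, μ {ω' | (X ω', Y ω) ∈ S} ∂μ := by
  have hmap := (indepFun_iff_map_prod_eq_prod_map_map hX.aemeasurable hY.aemeasurable).1 hXY
  calc μ {ω | (X ω, Y ω) ∈ S} = (μ.map X).prod (μ.map Y) S := by
        rw [← hmap, Measure.map_apply (hX.prodMk hY) hS]; rfl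
    _ = ∫⁻ ω, μ.map X ((fun x => (x, Y ω)) ⁻¹' S) ∂μ := by
        rw [Measure.prod_apply_symm hS, lintegral_map (measurable_measure_prodMk_right hS) hY]
    _ = ∫⁻ ω, μ {ω' | (X ω', Y ω) ∈ S} ∂μ :=
        lintegral_congr fun ω => Measure.map_apply hX (measurable_prodMk_right hS)

theorem measurable_measure_setOf_and_lt {Ω : Type*} [MeasurableSpace Ω] (μ : Measure Ω)
    (p : Ω → Prop) (Y : Ω → ℝ) :
    Measurable fun t : ℝ => μ {ω | p ω ∧ t < Y ω} :=
  Antitone.measurable fun _ _ hab => measure_mono fun _ hω => ⟨hω.1, hab.trans_lt hω.2⟩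

theorem measure_tie_eq_setLIntegral_map_restrict {Ω : Type*} [MeasurableSpace Ω]
    {μ : Measure Ω} [IsFiniteMeasure μ] {T1i Tqi T1j Tqj : Ω → ℝ} {τ : ℝ}
    (hT1i : Measurable T1i) (hTqi : Measurable Tqi) (hT1j : Measurable T1j)
    (hTqj : Measurable Tqj) (hposqj : ∀ ω, 0 < Tqj ω)
    (hindep : IndepFun (fun ω => (T1i ω, Tqi ω)) (fun ω => (T1j ω, Tqj ω)) μ) :
    μ {ω | τ < T1i ω ∧ τ < T1j ω ∧ Tqj ω < Tqi ω ∧ Tqj ω ≤ τ}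
      = ∫⁻ t in Ioc 0 τ, μ {ω | τ < T1i ω ∧ t < Tqi ω}
          ∂(μ.restrict {ω | τ < T1j ω}).map Tqj := by
  set F : ℝ → ℝ≥0∞ := fun t => μ {ω | τ < T1i ω ∧ t < Tqi ω}
  have hslice : ∀ ω, μ {ω' | τ < T1i ω' ∧ τ < T1j ω ∧ Tqj ω < Tqi ω' ∧ Tqj ω ≤ τ}
      = {ω | τ < T1j ω}.indicator (fun ω => (Ioc 0 τ).indicator F (Tqj ω)) ω := fun ω => by
    by_cases h1 : τ < T1j ω
    · by_cases h2 : Tqj ω ≤ τ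
      · simp [h1, h2, hposqj ω, F]
      · simp [h1, h2]
    · simp [h1]
  have hF := measurable_measure_setOf_and_lt μ (fun ω => τ < T1i ω) Tqi
  calc _ = ∫⁻ ω, μ {ω' | τ < T1i ω' ∧ τ < T1j ω ∧ Tqj ω < Tqi ω' ∧ Tqj ω ≤ τ} ∂μ :=
        hindep.measure_preimage_eq_lintegral (hT1i.prodMk hTqi) (hT1j.prodMk hTqj)
          (S := {p | τ < p.1.1 ∧ τ < p.2.1 ∧ p.2.2 < p.1.2 ∧ p.2.2 ≤ τ}) (by measurability)
    _ = ∫⁻ ω in {ω | τ < T1j ω}, (Ioc 0 τ).indicator F (Tqj ω) ∂μ := by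
        simp_rw [hslice]
        exact lintegral_indicator (measurableSet_lt measurable_const hT1j) _
    _ = _ := by
        rw [← lintegral_indicator measurableSet_Ioc,
          lintegral_map (hF.indicator measurableSet_Ioc) hTqj]

theorem conditional_tie_identification_integral_general
    {Ω : Type*} [MeasurableSpace Ω] (μ : Measure Ω) [IsProbabilityMeasure μ]
    (T1i Tqi T1j Tqj : Ω → ℝ)
    (hT1i : Measurable T1i) (hTqi : Measurable Tqi)
    (hT1j : Measurable T1j) (hTqj : Measurable Tqj)
    (hposqj : ∀ ω, 0 < Tqj ω)
    (hindep :
      IndepFun (fun ω => (T1i ω, Tqi ω)) (fun ω => (T1j ω, Tqj ω)) μ)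
    (τ : ℝ) (hτ : 0 < τ)
    (H : ℝ → ℝ)
    (hH : ∀ t : ℝ,
      HasDerivAt (fun s => (μ {ω | τ < T1j ω ∧ s < Tqj ω}).toReal) (-(H t)) t)
    (hHcont : Continuous H) :
    ∫ t in (0:ℝ)..τ, (μ {ω | τ < T1i ω ∧ t < Tqi ω}).toReal * H t
      = (μ {ω | τ < T1i ω ∧ τ < T1j ω ∧ Tqj ω < Tqi ω ∧ Tqj ω ≤ τ}).toReal := by
  rw [measure_tie_eq_setLIntegral_map_restrict hT1i hTqi hT1j hTqj hposqj hindep]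
  set ν := (μ.restrict {ω | τ < T1j ω}).map Tqj
  have hνIoi : ∀ s, ν (Ioi s) = μ {ω | τ < T1j ω ∧ s < Tqj ω} := fun s => by
    rw [Measure.map_apply hTqj measurableSet_Ioi,
      Measure.restrict_apply (hTqj measurableSet_Ioi), inter_comm]
    rfl
  have hHν : ∀ t, HasDerivAt (fun s => ν.real (Ioi s)) (-H t) t := by
    simpa only [Measure.real, hνIoi] using hH
  have hF := measurable_measure_setOf_and_lt μ (fun ω => τ < T1i ω) Tqi
  rw [Measure.eq_withDensity_of_hasDerivAt_measureReal_Ioi hHν hHcont,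
    setLIntegral_withDensity_eq_setLIntegral_mul _ hHcont.measurable.ennreal_ofReal hF
      measurableSet_Ioc,
    intervalIntegral.integral_of_le hτ.le, integral_eq_lintegral_of_nonneg_ae
      (ae_of_all _ fun t => mul_nonneg ENNReal.toReal_nonneg
        (Measure.nonneg_of_hasDerivAt_measureReal_Ioi (hHν t)))
      (hF.ennreal_toReal.mul hHcont.measurable).aestronglyMeasurable]
  refine congrArg ENNReal.toReal (lintegral_congr fun t => ?_)
  rw [ENNReal.ofReal_mul ENNReal.toReal_nonneg, ENNReal.ofReal_toReal (measure_ne_top _ _),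
    Pi.mul_apply, mul_comm]

/-- Key identification integral for the conditional tie-weighting
estimator: with `S_treated(τ,t) = P(T₁ᵢ > τ, T_{qi} > t)` and the control-subject
prefix subdensity `H_control(τ,t) = −∂/∂t P(T₁ⱼ > τ, T_{qj} > t)`,
`∫₀^τ S_treated(τ,t)·H_control(τ,t) dt
  = P(T₁ᵢ > τ, T₁ⱼ > τ, T_{qi} > T_{qj}, T_{qj} ≤ τ)`
for independent treated and control subjects. -/
theorem conditional_tie_identification_integral
    {Ω : Type*} [MeasurableSpace Ω] (μ : Measure Ω) [IsProbabilityMeasure μ]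
    (T1i Tqi T1j Tqj : Ω → ℝ)
    (hT1i : Measurable T1i) (hTqi : Measurable Tqi)
    (hT1j : Measurable T1j) (hTqj : Measurable Tqj)
    (hpos1i : ∀ ω, 0 < T1i ω) (hposqi : ∀ ω, 0 < Tqi ω)
    (hpos1j : ∀ ω, 0 < T1j ω) (hposqj : ∀ ω, 0 < Tqj ω)
    (hindep :
      IndepFun (fun ω => (T1i ω, Tqi ω)) (fun ω => (T1j ω, Tqj ω)) μ)
    (τ : ℝ) (hτ : 0 < τ)
    (H : ℝ → ℝ)
    (hH : ∀ t : ℝ,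
      HasDerivAt (fun s => (μ {ω | τ < T1j ω ∧ s < Tqj ω}).toReal) (-(H t)) t)
    (hHcont : Continuous H) :
    ∫ t in (0:ℝ)..τ, (μ {ω | τ < T1i ω ∧ t < Tqi ω}).toReal * H t
      = (μ {ω | τ < T1i ω ∧ τ < T1j ω ∧ Tqj ω < Tqi ω ∧ Tqj ω ≤ τ}).toReal :=
  conditional_tie_identification_integral_general μ T1i Tqi T1j Tqj hT1i hTqi hT1j hTqj hposqj
    hindep τ hτ H hH hHcont
end
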